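/- arXiv:2310.14114 — 5 statements merged into one kernel-verified Lean document; each statement's English description precedes it below -/
import Mathlib

section
/- The language Π = {a^{φ(j,n)} : (j,n) ∈ Δ} over the one-letter alphabet Σ = {a} is not REG-dissectible. -/
open Real Filter Nat

/-- `L₁` dissects `L₂` if both `L₂ \ L₁` and `L₁ ∩ L₂` are infinite. -/
def Dissects {T : Type*} (L₁ L₂ : Set (List T)) : Prop :=
  (L₂ \ L₁).Infinite ∧ (L₁ ∩ L₂).Infinite

/-- `L` is REG-dissectible if some regular language dissects it. -/
def RegDissectible {T : Type*} (L : Set (List T)) : Prop :=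
  ∃ R : Set (List T), Language.IsRegular R ∧ Dissects R L

/-- `L` is `c`-geometrically growing. -/
def GeomGrowing {T : Type*} (c : ℝ) (L : Set (List T)) : Prop :=
  ∀ u ∈ L, ∃ v ∈ L, u.length < v.length ∧ (v.length : ℝ) ≤ c * u.length

/-- `γ = 1/(ln β − ln α)`. -/
noncomputable def gam (α β : ℕ) : ℝ := 1 / (Real.log β - Real.log α)

/-- `⌊γ ln n⌋`. -/
noncomputable def flog (α β n : ℕ) : ℕ := ⌊gam α β * Real.log n⌋₊

/-- `(j, n) ∈ Δ`. -/
def InDelta (α β j n : ℕ) : Prop := α * flog α β n < n ∧ j ≤ flog α β n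

/-- `φ(j,n) = (β/α)^j · n!`, regarded as a real number. -/
noncomputable def phi (α β j n : ℕ) : ℝ := ((β : ℝ) / (α : ℝ)) ^ j * (n ! : ℝ)

/-- The language `Π = {a^{φ(j,n)} : (j,n) ∈ Δ}` over the one-letter alphabet. -/
def Pi' (α β : ℕ) : Set (List (Fin 1)) :=
  {w | ∃ j n : ℕ, InDelta α β j n ∧ (w.length : ℝ) = phi α β j n}

/-!
A regular language over a one-letter alphabet is closed, above some length, under adding
multiples of a fixed period `P` (pumping lemma, with `P = (#states)!` a multiple of every
possible pumping length). On the other hand, for `(j, n) ∈ Δ` with `n` large we have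
`α j + P ≤ n`, so `P α^j ∣ n!` and hence `P ∣ φ(j, n) = β^j · n! / α^j`: all long words of `Π`
have length divisible by `P`. If `R` dissected `Π`, a long word `v ∈ Π ∩ R` could then be
pumped to any longer word `u ∈ Π \ R`, a contradiction.
-/

theorem Language.IsRegular.exists_mem_of_dvd_length_sub {T : Type*} [Subsingleton T]
    {L : Language T} (hL : L.IsRegular) :
    ∃ N P : ℕ, 0 < P ∧ ∀ x ∈ L, N ≤ x.length → ∀ y : List T, x.length ≤ y.length →
      P ∣ y.length - x.length → y ∈ L := by
  obtain ⟨σ, _, M, rfl⟩ := hL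
  refine ⟨Fintype.card σ, (Fintype.card σ)!, factorial_pos _, fun x hx hxN y hxy hP => ?_⟩
  obtain ⟨a, b, c, rfl, hab, hb, hpump⟩ := M.pumping_lemma hx hxN
  have hb_pos : 0 < b.length := List.length_pos_iff.mpr hb
  obtain ⟨k, hk⟩ : b.length ∣ y.length - (a ++ b ++ c).length :=
    (Nat.dvd_factorial hb_pos (by omega)).trans hP
  have hy : a ++ (List.replicate (k + 1) b).flatten ++ c = y := by
    apply List.length_injective
    simp only [List.length_append, List.length_flatten, List.map_replicate, List.sum_replicate,
      smul_eq_mul] at hk ⊢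
    grind
  rw [← hy]
  refine hpump (Language.mem_mul.mpr ⟨_, Language.mem_mul.mpr ⟨a, rfl, _, ?_, rfl⟩, c, rfl, rfl⟩)
  exact Language.join_mem_kstar fun z hz => (List.eq_of_mem_replicate hz).symm ▸ rfl

theorem Nat.factorial_pow_dvd_factorial_mul (a j : ℕ) : (a !) ^ j ∣ (a * j)! := by
  simpa [mul_comm] using Nat.prod_factorial_dvd_factorial_sum (Finset.range j) fun _ => a

theorem Nat.mul_pow_dvd_factorial {a j p n : ℕ} (ha : 0 < a) (hp : 0 < p)
    (hn : a * j + p ≤ n) : p * a ^ j ∣ n ! :=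
  calc p * a ^ j ∣ p ! * (a !) ^ j :=
        mul_dvd_mul (dvd_factorial hp le_rfl) (pow_dvd_pow_of_dvd (dvd_factorial ha le_rfl) j)
    _ ∣ p ! * (a * j)! := mul_dvd_mul_left _ (factorial_pow_dvd_factorial_mul a j)
    _ ∣ (p + a * j)! := factorial_mul_factorial_dvd_factorial_add _ _
    _ ∣ n ! := factorial_dvd_factorial (by omega)

theorem eventually_mul_log_add_le (c p : ℝ) : ∀ᶠ n : ℕ in atTop, c * Real.log n + p ≤ n := by
  have h : (fun x : ℝ => c * Real.log x + p) =o[atTop] id :=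
    (isLittleO_log_id_atTop.const_mul_left c).add (Asymptotics.isLittleO_const_id_atTop p)
  filter_upwards [tendsto_natCast_atTop_atTop.eventually
    ((h.bound one_pos).and (eventually_ge_atTop 0))] with n ⟨hn, hn₀⟩
  simpa [Real.norm_eq_abs, abs_of_nonneg hn₀] using (le_abs_self _).trans hn

theorem gam_pos {α β : ℕ} (hα : 0 < α) (hαβ : α < β) : 0 < gam α β :=
  one_div_pos.mpr (sub_pos.mpr (Real.log_lt_log (by exact_mod_cast hα) (by exact_mod_cast hαβ)))

theorem eventually_mul_flog_add_le {α β : ℕ} (hα : 0 < α) (hαβ : α < β) (p : ℕ) :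
    ∀ᶠ n in atTop, α * flog α β n + p ≤ n := by
  filter_upwards [eventually_mul_log_add_le (α * gam α β) p] with n hn
  have hflog : (flog α β n : ℝ) ≤ gam α β * Real.log n :=
    Nat.floor_le (mul_nonneg (gam_pos hα hαβ).le (Real.log_natCast_nonneg n))
  have : (α : ℝ) * flog α β n + p ≤ n := by
    nlinarith [(Nat.cast_nonneg α : (0 : ℝ) ≤ α)]
  exact_mod_cast this

theorem InDelta.lt {α β j n : ℕ} (hα : 0 < α) (h : InDelta α β j n) : j < n :=
  lt_of_le_of_lt (h.2.trans (Nat.le_mul_of_pos_left _ hα)) h.1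

theorem mul_pow_eq_of_natCast_eq_phi {α β j n L : ℕ} (hα : 0 < α)
    (hL : (L : ℝ) = phi α β j n) : L * α ^ j = β ^ j * n ! := by
  have hα' : (α : ℝ) ≠ 0 := by exact_mod_cast hα.ne'
  rw [phi, div_pow] at hL
  exact_mod_cast (by rw [hL]; field_simp : (L : ℝ) * α ^ j = β ^ j * n !)

theorem dvd_of_natCast_eq_phi {α β j n L p : ℕ} (hα : 0 < α) (hL : (L : ℝ) = phi α β j n)
    (hp : p * α ^ j ∣ n !) : p ∣ L := by
  obtain ⟨m, hm⟩ := hp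
  have h := mul_pow_eq_of_natCast_eq_phi hα hL
  rw [hm] at h
  exact ⟨β ^ j * m, Nat.eq_of_mul_eq_mul_right (pow_pos hα j) (by rw [h]; ring)⟩

theorem le_of_natCast_eq_phi {α β j n L : ℕ} (hα : 0 < α) (hβ : 0 < β) (hjn : j ≤ n)
    (hL : (L : ℝ) = phi α β j n) : L ≤ β ^ n * n ! :=
  calc L ≤ L * α ^ j := Nat.le_mul_of_pos_right _ (pow_pos hα j)
    _ = β ^ j * n ! := mul_pow_eq_of_natCast_eq_phi hα hL
    _ ≤ β ^ n * n ! := Nat.mul_le_mul_right _ (Nat.pow_le_pow_right hβ hjn)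

theorem exists_forall_dvd_length_of_mem_Pi' {α β : ℕ} (hα : 0 < α) (hαβ : α < β) {P : ℕ}
    (hP : 0 < P) : ∃ K, ∀ w ∈ Pi' α β, K < w.length → P ∣ w.length := by
  obtain ⟨N, hN⟩ := eventually_atTop.mp (eventually_mul_flog_add_le hα hαβ P)
  refine ⟨β ^ N * N !, fun w ⟨j, n, hjn, hw⟩ hK => ?_⟩
  have hNn : N ≤ n := by
    by_contra! h
    have := le_of_natCast_eq_phi hα (hα.trans hαβ) (hjn.lt hα).le hw
    have := Nat.mul_le_mul (Nat.pow_le_pow_right (hα.trans hαβ) h.le) (factorial_le h.le)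
    omega
  refine dvd_of_natCast_eq_phi hα hw (mul_pow_dvd_factorial hα hP ?_)
  have := hN n hNn
  have := Nat.mul_le_mul_left α hjn.2
  omega

theorem Set.Infinite.exists_length_gt {T : Type*} [Subsingleton T] {S : Set (List T)}
    (hS : S.Infinite) (K : ℕ) : ∃ w ∈ S, K < w.length := by
  obtain ⟨_, ⟨w, hw, rfl⟩, hK⟩ := (hS.image List.length_injective.injOn).exists_gt K
  exact ⟨w, hw, hK⟩

/-- The language `Π` is not REG-dissectible. -/
theorem stmt_1 (α β : ℕ) (hα : 0 < α) (hαβ : α < β) :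
    ¬ RegDissectible (Pi' α β) := by
  rintro ⟨R, hR, hout, hin⟩
  obtain ⟨N, P, hP, hpump⟩ := hR.exists_mem_of_dvd_length_sub
  obtain ⟨K, hK⟩ := exists_forall_dvd_length_of_mem_Pi' hα hαβ hP
  obtain ⟨v, ⟨hvR, hvPi⟩, hv⟩ := hin.exists_length_gt (max K N)
  obtain ⟨u, ⟨huPi, huR⟩, hu⟩ := hout.exists_length_gt v.length
  exact huR <| hpump v hvR (by omega) u hu.le <|
    Nat.dvd_sub (hK u huPi (by omega)) (hK v hvPi (by omega))
end

section
/- If c is a real number with c > β/α, then there exists a sublanguage Π̄ ⊆ Π such that Π̄ is a c-geometrically growing language and Π \ Π̄ is finite. -/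
open Real Filter Nat

/- Auxiliary lemmas -/

lemma aux_factorial_mul_dvd {m n : ℕ} (h : m < n) : m ! * n ∣ n ! := by
  cases n with
  | zero => omega
  | succ n' =>
    have h1 : m ! ∣ n' ! := Nat.factorial_dvd_factorial (by omega)
    have h2 : m ! * (n' + 1) ∣ n' ! * (n' + 1) := mul_dvd_mul_right h1 _
    simpa [Nat.factorial_succ, Nat.mul_comm] using h2

lemma aux_pow_dvd_fac (a j : ℕ) (ha : 0 < a) : a ^ j ∣ (a * j)! := by
  induction j with
  | zero => simp
  | succ j ih =>
    have h0 : a ^ (j + 1) ∣ (a * j)! * (a * (j + 1)) := by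
      rw [pow_succ]
      exact mul_dvd_mul ih (dvd_mul_right a (j + 1))
    have h2 : (a * j)! * (a * (j + 1)) ∣ (a * (j + 1))! :=
      aux_factorial_mul_dvd (by nlinarith)
    exact h0.trans h2

lemma aux_phi_eq_nat (α β j n : ℕ) (hα : 0 < α) (h : α ^ j ∣ n !) :
    ((β ^ j * (n ! / α ^ j) : ℕ) : ℝ) = phi α β j n := by
  have hαr : ((α : ℝ)) ≠ 0 := by positivity
  have h2 : ((n ! / α ^ j : ℕ) : ℝ) = (n ! : ℝ) / (α : ℝ) ^ j := by
    rw [Nat.cast_div h (by positivity)]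
    push_cast
    ring
  push_cast [h2]
  rw [phi, div_pow]
  ring

lemma aux_log_r (α β : ℕ) (hα : 0 < α) (hαβ : α < β) :
    gam α β * Real.log ((β : ℝ) / α) = 1 := by
  have hα' : (0 : ℝ) < α := by exact_mod_cast hα
  have hβ' : (0 : ℝ) < β := by exact_mod_cast hα.trans hαβ
  have hlt : Real.log α < Real.log β := Real.log_lt_log hα' (by exact_mod_cast hαβ)
  rw [Real.log_div (by positivity) (by positivity), gam]
  rw [one_div, inv_mul_cancel₀ (by linarith)]

lemma aux_gam_pos (α β : ℕ) (hα : 0 < α) (hαβ : α < β) : 0 < gam α β := by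
  have hα' : (0 : ℝ) < α := by exact_mod_cast hα
  have hlt : Real.log α < Real.log β := Real.log_lt_log hα' (by exact_mod_cast hαβ)
  rw [gam]
  have h : 0 < Real.log β - Real.log α := by linarith
  positivity

lemma aux_pow_flog_le (α β n : ℕ) (hα : 0 < α) (hαβ : α < β) (hn : 0 < n) :
    ((β : ℝ) / α) ^ flog α β n ≤ n := by
  have hα' : (0 : ℝ) < α := by exact_mod_cast hα
  have hr : 1 < (β : ℝ) / α := (one_lt_div hα').mpr (by exact_mod_cast hαβ)
  have hg := aux_gam_pos α β hα hαβ
  have hlogn : 0 ≤ Real.log n := Real.log_nonneg (by exact_mod_cast hn)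
  calc ((β : ℝ) / α) ^ flog α β n
      = ((β : ℝ) / α) ^ (flog α β n : ℝ) := (Real.rpow_natCast _ _).symm
    _ ≤ ((β : ℝ) / α) ^ (gam α β * Real.log n) :=
        Real.rpow_le_rpow_of_exponent_le hr.le (Nat.floor_le (by positivity))
    _ = n := by
        rw [Real.rpow_def_of_pos (by linarith),
          show Real.log ((β : ℝ) / α) * (gam α β * Real.log n)
            = Real.log n * (gam α β * Real.log ((β : ℝ) / α)) by ring,
          aux_log_r α β hα hαβ, mul_one, Real.exp_log (by exact_mod_cast hn)]

lemma aux_le_pow_flog (α β n : ℕ) (hα : 0 < α) (hαβ : α < β) (hn : 0 < n) :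
    (n : ℝ) * α ≤ ((β : ℝ) / α) ^ flog α β n * β := by
  have hα' : (0 : ℝ) < α := by exact_mod_cast hα
  have hβ' : (0 : ℝ) < β := by exact_mod_cast hα.trans hαβ
  have hr : 1 < (β : ℝ) / α := (one_lt_div hα').mpr (by exact_mod_cast hαβ)
  have key : (n : ℝ) ≤ ((β : ℝ) / α) ^ flog α β n * ((β : ℝ) / α) := by
    have h1 : gam α β * Real.log n < (flog α β n : ℝ) + 1 := by
      exact_mod_cast Nat.lt_floor_add_one (gam α β * Real.log n)
    have h2 : ((β : ℝ) / α) ^ (gam α β * Real.log n) ≤ ((β : ℝ) / α) ^ ((flog α β n : ℝ) + 1) :=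
      Real.rpow_le_rpow_of_exponent_le hr.le h1.le
    have h3 : ((β : ℝ) / α) ^ (gam α β * Real.log n) = n := by
      rw [Real.rpow_def_of_pos (by linarith),
        show Real.log ((β : ℝ) / α) * (gam α β * Real.log n)
          = Real.log n * (gam α β * Real.log ((β : ℝ) / α)) by ring,
        aux_log_r α β hα hαβ, mul_one, Real.exp_log (by exact_mod_cast hn)]
    have h4 : ((β : ℝ) / α) ^ ((flog α β n : ℝ) + 1)
        = ((β : ℝ) / α) ^ flog α β n * ((β : ℝ) / α) := by
      rw [Real.rpow_add (by linarith), Real.rpow_one, Real.rpow_natCast]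
    rw [h3, h4] at h2
    exact h2
  have hpow : (0 : ℝ) < ((β : ℝ) / α) ^ flog α β n := by positivity
  rw [div_eq_mul_inv] at key
  have := mul_le_mul_of_nonneg_right key hα'.le
  calc (n : ℝ) * α ≤ ((β : ℝ) / α) ^ flog α β n * (β * (α : ℝ)⁻¹) * α := this
    _ = ((β : ℝ) / α) ^ flog α β n * β := by field_simp

set_option maxHeartbeats 1200000 in
/-- If `c > β/α` then some cofinite sublanguage of `Π` is `c`-geometrically growing. -/
theorem stmt_2 (α β : ℕ) (hα : 0 < α) (hαβ : α < β) (c : ℝ) (hc : (β : ℝ) / (α : ℝ) < c) :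
    ∃ P : Set (List (Fin 1)), P ⊆ Pi' α β ∧ GeomGrowing c P ∧ (Pi' α β \ P).Finite := by
  have hα' : (0 : ℝ) < α := by exact_mod_cast hα
  have hβ : 0 < β := hα.trans hαβ
  have hβ' : (0 : ℝ) < β := by exact_mod_cast hβ
  have hr : 1 < (β : ℝ) / α := (one_lt_div hα').mpr (by exact_mod_cast hαβ)
  have hc1 : 0 < c := by linarith
  have hg := aux_gam_pos α β hα hαβ
  -- eventual condition 1 : α * flog m < m
  have E1 : ∀ᶠ m : ℕ in atTop, α * flog α β m < m := by
    set ε : ℝ := 1 / (2 * α * gam α β + 1) with hε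
    have hεpos : 0 < ε := by rw [hε]; positivity
    have hlo := Real.isLittleO_log_id_atTop.def hεpos
    have E1r : ∀ᶠ x : ℝ in atTop, Real.log x ≤ ε * x := by
      filter_upwards [hlo, eventually_ge_atTop (1 : ℝ)] with x h hx
      have h1 : |Real.log x| ≤ ε * |x| := by simpa [Real.norm_eq_abs] using h
      have h2 : |Real.log x| = Real.log x := abs_of_nonneg (Real.log_nonneg hx)
      have h3 : |x| = x := abs_of_nonneg (by linarith)
      rw [h2, h3] at h1
      exact h1
    filter_upwards [(tendsto_natCast_atTop_atTop (R := ℝ)).eventually E1r,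
      eventually_ge_atTop 1] with m hm hm1
    have hlogm : 0 ≤ Real.log m := Real.log_nonneg (by exact_mod_cast hm1)
    have hfl : (flog α β m : ℝ) ≤ gam α β * Real.log m := Nat.floor_le (by positivity)
    have hεq : ε * (2 * α * gam α β + 1) = 1 := by
      rw [hε]; field_simp
    have hm1' : (1 : ℝ) ≤ m := by exact_mod_cast hm1
    have key : (α : ℝ) * (flog α β m : ℝ) < m := by
      nlinarith [mul_le_mul_of_nonneg_left hfl hα'.le,
        mul_le_mul_of_nonneg_left hm (mul_pos hα' hg).le,
        mul_pos hα' hg, mul_le_mul_of_nonneg_right hεq.le (mul_pos hα' hg).le]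
    exact_mod_cast key
  -- eventual condition 2 : (n+1) β ≤ c n α
  have hcα : (β : ℝ) < c * α := by rwa [div_lt_iff₀ hα'] at hc
  have E2 : ∀ᶠ n : ℕ in atTop, ((n : ℝ) + 1) * β ≤ c * ((n : ℝ) * α) := by
    filter_upwards [(tendsto_natCast_atTop_atTop (R := ℝ)).eventually_ge_atTop
      ((β : ℝ) / (c * α - β))] with n hn
    have h : (β : ℝ) ≤ (n : ℝ) * (c * α - β) := by
      rw [div_le_iff₀ (by linarith)] at hn
      linarith
    nlinarith
  obtain ⟨N, hN⟩ := eventually_atTop.mp (E1.and E2)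
  refine ⟨{w | ∃ j n : ℕ, N ≤ n ∧ InDelta α β j n ∧ (w.length : ℝ) = phi α β j n}, ?_, ?_, ?_⟩
  · rintro w ⟨j, n, _, hd, hl⟩
    exact ⟨j, n, hd, hl⟩
  · -- geometric growth
    rintro u ⟨j, n, hn, ⟨hd1, hd2⟩, hl⟩
    have hn0 : 0 < n := lt_of_le_of_lt (Nat.zero_le _) hd1
    have hfact : (0 : ℝ) < (n ! : ℝ) := by exact_mod_cast Nat.factorial_pos n
    by_cases hj : j < flog α β n
    · -- move from j to j+1
      have hmul : α * (j + 1) ≤ n := le_trans (Nat.mul_le_mul_left α hj) hd1.le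
      have hdvd : α ^ (j + 1) ∣ n ! :=
        (aux_pow_dvd_fac α (j + 1) hα).trans (Nat.factorial_dvd_factorial hmul)
      set k := β ^ (j + 1) * (n ! / α ^ (j + 1)) with hkdef
      have hk : (k : ℝ) = phi α β (j + 1) n := aux_phi_eq_nat α β (j + 1) n hα hdvd
      have hpow : (0 : ℝ) < ((β : ℝ) / α) ^ j := by positivity
      have hltR : (u.length : ℝ) < (k : ℝ) := by
        rw [hl, hk]
        rw [phi, phi, pow_succ]
        nlinarith [mul_pos (mul_pos hpow hfact) (sub_pos.mpr hr)]
      refine ⟨List.replicate k 0, ⟨j + 1, n, hn, ⟨hd1, hj⟩, by simpa using hk⟩, ?_, ?_⟩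
      · simpa using (by exact_mod_cast hltR : u.length < k)
      · rw [List.length_replicate, hk, hl, phi, phi, pow_succ]
        nlinarith [mul_le_mul_of_nonneg_left hc.le (mul_pos hpow hfact).le]
    · -- move from (flog n, n) to (0, n+1)
      have hj' : j = flog α β n := le_antisymm hd2 (not_lt.1 hj)
      have hA := aux_pow_flog_le α β n hα hαβ hn0
      have hB := aux_le_pow_flog α β n hα hαβ hn0
      have h2 := (hN n hn).2
      have hpow : (0 : ℝ) < ((β : ℝ) / α) ^ flog α β n := by positivity
      have hul : (u.length : ℝ) = ((β : ℝ) / α) ^ flog α β n * (n ! : ℝ) := by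
        rw [hl, phi, hj']
      have hfs : ((n + 1)! : ℝ) = ((n : ℝ) + 1) * (n ! : ℝ) := by
        push_cast [Nat.factorial_succ]; ring
      have hltR : (u.length : ℝ) < ((n + 1)! : ℝ) := by
        rw [hul, hfs]
        have hA' := mul_le_mul_of_nonneg_right hA hfact.le
        linarith
      have h3 : (n : ℝ) + 1 ≤ c * ((β : ℝ) / α) ^ flog α β n := by
        have h4 : ((n : ℝ) + 1) * β ≤ c * ((β : ℝ) / α) ^ flog α β n * β := by
          nlinarith [mul_le_mul_of_nonneg_left hB hc1.le]
        exact le_of_mul_le_mul_right h4 hβ'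
      refine ⟨List.replicate ((n + 1)!) 0,
        ⟨0, n + 1, by omega, ⟨(hN (n + 1) (by omega)).1, Nat.zero_le _⟩, by simp [phi]⟩, ?_, ?_⟩
      · simpa using (by exact_mod_cast hltR : u.length < (n + 1)!)
      · rw [List.length_replicate, hul, hfs]
        have := mul_le_mul_of_nonneg_right h3 hfact.le
        linarith
  · -- cofiniteness
    apply Set.Finite.subset (List.finite_length_le (Fin 1) (N * Nat.factorial N))
    rintro w ⟨⟨j, n, ⟨hd1, hd2⟩, hl⟩, hw⟩
    have hn : n < N := by
      by_contra h
      exact hw ⟨j, n, le_of_not_gt h, ⟨hd1, hd2⟩, hl⟩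
    have hn0 : 0 < n := lt_of_le_of_lt (Nat.zero_le _) hd1
    have hfact : (0 : ℝ) < (n ! : ℝ) := by exact_mod_cast Nat.factorial_pos n
    have hA := aux_pow_flog_le α β n hα hαβ hn0
    have h1 : ((β : ℝ) / α) ^ j ≤ ((β : ℝ) / α) ^ flog α β n :=
      pow_le_pow_right₀ hr.le hd2
    have hnN : (n : ℝ) ≤ (N : ℝ) := by exact_mod_cast hn.le
    have hfN : (n ! : ℝ) ≤ (N ! : ℝ) := by
      exact_mod_cast Nat.factorial_le hn.le
    have key : (w.length : ℝ) ≤ (N : ℝ) * (N ! : ℝ) := by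
      rw [hl, phi]
      have s1 : ((β : ℝ) / α) ^ j * (n ! : ℝ) ≤ (n : ℝ) * (n ! : ℝ) :=
        mul_le_mul_of_nonneg_right (h1.trans hA) hfact.le
      have s2 : (n : ℝ) * (n ! : ℝ) ≤ (N : ℝ) * (N ! : ℝ) :=
        mul_le_mul hnN hfN hfact.le (by positivity)
      linarith
    show w.length ≤ N * Nat.factorial N
    exact_mod_cast key
end

section
/- If (j,n) ∈ Δ, then φ(j,n) = (β/α)^j · n! is a positive integer and ω(n) divides φ(j,n). -/
open Real Filter Nat

/-- `ω(n) = n!/((α⌊γ ln n⌋ + 1)!)`, a natural number. -/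
noncomputable def om (α β n : ℕ) : ℕ := n ! / (α * flog α β n + 1)!

/-! On `Δ` we have `α^j ∣ α^k ∣ (α!)^k ∣ (α k)! ∣ (α k + 1)! ∣ n!` with `k = ⌊γ ln n⌋`, the middle
step because multinomial coefficients are integers. Hence `φ(j,n) = β^j · (n! / α^j)` is a positive
integer, and `ω(n) = n! / (α k + 1)!` divides `n! / α^j`. -/

lemma pow_dvd_factorial_mul {a : ℕ} (ha : 0 < a) (k : ℕ) : a ^ k ∣ (a * k)! := by
  have h := Nat.prod_factorial_dvd_factorial_sum (Finset.range k) fun _ ↦ a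
  simp only [Finset.prod_const, Finset.sum_const, Finset.card_range, smul_eq_mul] at h
  exact (pow_dvd_pow_of_dvd (Nat.dvd_factorial ha le_rfl) k).trans (by rwa [mul_comm])

lemma div_pow_mul_natCast_of_pow_dvd {a b j N : ℕ} (h : a ^ j ∣ N) :
    ((b : ℝ) / a) ^ j * N = ((b ^ j * (N / a ^ j) : ℕ) : ℝ) := by
  obtain ⟨c, rfl⟩ := h
  rcases eq_or_ne (a ^ j) 0 with h0 | h0
  · simp [h0]
  · rw [Nat.mul_div_cancel_left c (Nat.pos_of_ne_zero h0)]
    have h0' : (a : ℝ) ^ j ≠ 0 := mod_cast h0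
    push_cast
    rw [div_pow, ← mul_assoc, div_mul_cancel₀ _ h0']

/-- If `(j,n) ∈ Δ` then `φ(j,n)` is a positive integer divisible by `ω(n)`. -/
theorem stmt_4 (α β : ℕ) (hα : 0 < α) (hαβ : α < β) (j n : ℕ) (h : InDelta α β j n) :
    ∃ m : ℕ, 0 < m ∧ (m : ℝ) = phi α β j n ∧ om α β n ∣ m := by
  obtain ⟨hn, hj⟩ := h
  have hpow : α ^ j ∣ (α * flog α β n + 1)! :=
    (pow_dvd_pow α hj).trans <| (pow_dvd_factorial_mul hα _).trans <|
      Nat.factorial_dvd_factorial (Nat.le_succ _)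
  have hfact : (α * flog α β n + 1)! ∣ n ! := Nat.factorial_dvd_factorial hn
  refine ⟨β ^ j * (n ! / α ^ j), ?_, (div_pow_mul_natCast_of_pow_dvd (hpow.trans hfact)).symm, ?_⟩
  · exact Nat.mul_pos (pow_pos (hα.trans hαβ) j)
      (Nat.div_pos (Nat.le_of_dvd (Nat.factorial_pos n) (hpow.trans hfact)) (pow_pos hα j))
  · exact (Nat.div_dvd_div_left hfact hpow).mul_left _
end

section
/- If a regular language R over the one-letter alphabet Σ = {a} dissects a language L ⊆ Σ*, then there exists an infinite language R̄ over Σ that is accepted by a deterministic finite automaton with exactly one accepting state and such that R̄ dissects L. -/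
open Real Filter

/-- If a regular language over the one-letter alphabet dissects `L`, then some infinite
language accepted by a DFA with exactly one accepting state dissects `L`. -/
theorem stmt_6 (R L : Set (List (Fin 1))) (hR : Language.IsRegular R) (h : Dissects R L) :
    ∃ (σ : Type) (_ : Fintype σ) (M : DFA (Fin 1) σ),
      (∃ t : σ, M.accept = {t}) ∧ Set.Infinite (M.accepts : Set (List (Fin 1))) ∧
        Dissects (M.accepts : Set (List (Fin 1))) L := by
  obtain ⟨σ, fσ, M, hM⟩ := hR
  obtain ⟨hdiff, hint⟩ := h
  haveI : Infinite ↥(R ∩ L) := hint.to_subtype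
  obtain ⟨t, ht⟩ := Finite.exists_infinite_fiber (fun w : ↥(R ∩ L) => M.eval w.1)
  haveI := ht
  -- t is an accepting state of M
  obtain ⟨⟨w₀, hw₀⟩⟩ := (inferInstance : Nonempty ↥((fun w : ↥(R ∩ L) => M.eval w.1) ⁻¹' {t}))
  have htacc : t ∈ M.accept := by
    have : (w₀ : List (Fin 1)) ∈ M.accepts := by rw [hM]; exact w₀.2.1
    rw [DFA.mem_accepts] at this
    have : M.eval (w₀ : List (Fin 1)) = t := hw₀
    rwa [← this]
  set M' : DFA (Fin 1) σ := ⟨M.step, M.start, {t}⟩ with hM'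
  have hmem : ∀ w : List (Fin 1), w ∈ M'.accepts ↔ M.eval w = t := by
    intro w
    rw [DFA.mem_accepts]
    exact Iff.rfl
  have hsub : ∀ w : List (Fin 1), w ∈ M'.accepts → w ∈ R := by
    intro w hw
    rw [hmem] at hw
    have : w ∈ M.accepts := by rw [DFA.mem_accepts, hw]; exact htacc
    rwa [hM] at this
  have hinter : (Set.inter (M'.accepts : Set (List (Fin 1))) L).Infinite := by
    apply Set.infinite_of_injective_forall_mem
      (f := fun x : ↥((fun w : ↥(R ∩ L) => M.eval w.1) ⁻¹' {t}) => (x.1.1 : List (Fin 1)))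
    · intro a b hab
      exact Subtype.ext (Subtype.ext hab)
    · intro x
      exact ⟨(hmem _).2 x.2, x.1.2.2⟩
  refine ⟨σ, fσ, M', ⟨t, rfl⟩, ?_, ?_, hinter⟩
  · exact hinter.mono Set.inter_subset_left
  · exact hdiff.mono (fun w hw => ⟨hw.1, fun hc => hw.2 (hsub w hc)⟩)
end

section
/- For (j,n) ∈ Δ and (j̄,n̄) ∈ Δ, if n < n̄, or n = n̄ and j < j̄, then φ(j,n) < φ(j̄,n̄). -/
open Real Filter Nat

/-- For `(j,n), (j̄,n̄) ∈ Δ`, if `n < n̄`, or `n = n̄` and `j < j̄`, then `φ(j,n) < φ(j̄,n̄)`. -/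
theorem stmt_14 (α β : ℕ) (hα : 0 < α) (hαβ : α < β) (j n j' n' : ℕ)
    (h : InDelta α β j n) (h' : InDelta α β j' n')
    (hlt : n < n' ∨ (n = n' ∧ j < j')) :
    phi α β j n < phi α β j' n' := by
  have hα' : (0:ℝ) < α := by exact_mod_cast hα
  have hβ' : (α:ℝ) < β := by exact_mod_cast hαβ
  have hc : (1:ℝ) < (β:ℝ)/α := (one_lt_div hα').mpr hβ'
  have hc0 : (0:ℝ) < (β:ℝ)/α := lt_trans one_pos hc
  rcases hlt with hn | ⟨rfl, hj⟩
  · -- n < n'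
    have hn0 : 0 < n := lt_of_le_of_lt (Nat.zero_le _) h.1
    have hn0' : (0:ℝ) < n := by exact_mod_cast hn0
    have hlogd : Real.log α < Real.log β := Real.log_lt_log hα' hβ'
    have hd : (0:ℝ) < Real.log β - Real.log α := sub_pos.mpr hlogd
    have hgam : 0 < gam α β := by
      unfold gam; exact one_div_pos.mpr hd
    have hfl : ((flog α β n : ℝ)) ≤ gam α β * Real.log n := by
      unfold flog
      exact Nat.floor_le (mul_nonneg hgam.le (Real.log_nonneg (by exact_mod_cast hn0)))
    have hlogc : Real.log ((β:ℝ)/α) = Real.log β - Real.log α :=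
      Real.log_div (ne_of_gt (lt_trans hα' hβ')) (ne_of_gt hα')
    have hpow : ((β:ℝ)/α) ^ j ≤ (n : ℝ) := by
      calc ((β:ℝ)/α) ^ j ≤ ((β:ℝ)/α) ^ (flog α β n) := pow_le_pow_right₀ hc.le h.2
        _ = ((β:ℝ)/α) ^ ((flog α β n : ℝ)) := (Real.rpow_natCast _ _).symm
        _ ≤ ((β:ℝ)/α) ^ (gam α β * Real.log n) :=
            Real.rpow_le_rpow_of_exponent_le hc.le hfl
        _ = (n : ℝ) := by
            rw [Real.rpow_def_of_pos hc0, hlogc]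
            have : (Real.log β - Real.log α) * (gam α β * Real.log n) = Real.log n := by
              unfold gam; field_simp
            rw [this, Real.exp_log hn0']
    have hfact : (0:ℝ) < (n ! : ℝ) := by exact_mod_cast n.factorial_pos
    have h1 : phi α β j n ≤ (n : ℝ) * (n ! : ℝ) :=
      mul_le_mul_of_nonneg_right hpow hfact.le
    have h2 : (n : ℝ) * (n ! : ℝ) < ((n + 1 : ℕ) : ℝ) * (n ! : ℝ) := by
      apply mul_lt_mul_of_pos_right _ hfact
      push_cast; linarith
    have h3 : ((n + 1 : ℕ) : ℝ) * (n ! : ℝ) = ((n + 1)! : ℝ) := by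
      rw [Nat.factorial_succ]; push_cast; ring
    have h4 : ((n + 1)! : ℝ) ≤ (n' ! : ℝ) := by
      exact_mod_cast Nat.factorial_le hn
    have h5 : (n' ! : ℝ) ≤ phi α β j' n' := by
      unfold phi
      nlinarith [(by exact_mod_cast n'.factorial_pos : (0:ℝ) < (n' ! : ℝ)),
        one_le_pow₀ (a := (β:ℝ)/α) (n := j') hc.le]
    calc phi α β j n ≤ (n : ℝ) * (n ! : ℝ) := h1
      _ < ((n + 1 : ℕ) : ℝ) * (n ! : ℝ) := h2
      _ = ((n + 1)! : ℝ) := h3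
      _ ≤ (n' ! : ℝ) := h4
      _ ≤ phi α β j' n' := h5
  · unfold phi
    exact mul_lt_mul_of_pos_right (pow_lt_pow_right₀ hc hj)
      (by exact_mod_cast n.factorial_pos)
end
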